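/- Fix a node u ∈ S, a subset V ⊆ C(u), and a child v ∈ C(u) \ V. Then D^u_{V ∪ {v}}(v) = D^u_{V, C(v)}(v), and for every a ∈ T(v) with a ≠ v, D^u_{V ∪ {v}}(a) = min over all partitions C(v) = W ⊎ W̄ into two disjoint (possibly empty) sets with a ∈ T(W̄) of (D^u_{V,W}(v) + D^v_{W̄}(a)). -/

import Mathlib

/-!
A conforming path from `u` through `{u} ∪ T(V ∪ {v})` that ends at `a ∈ T(v)` must traverse
`T(v)` as its final block, because `T(v)` is consecutive and contains the last vertex. Cutting
that block at `v` splits it into whole child subtrees: each `T(c)`, `c ∈ C(v)`, is consecutive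
and avoids `v`, so it lies entirely before or entirely after `v`. The part up to `v` is a path
for `D^u_{V,W}(v)` and the part from `v` on is a path for `D^v_{W̄}(a)`; conversely two such
paths glue at `v` into a conforming path. All minima are attained, since the path sets are
finite and, by depth-first orders of the subtrees, nonempty.
-/

/-- A rooted tree on a vertex type `V`, given by a parent function under which
every vertex reaches the root. -/
structure ParentTree (V : Type) where
  root : V
  parent : V → V
  parent_root : parent root = root
  reaches_root : ∀ v, ∃ k, parent^[k] v = root

namespace ParentTree

variable {V : Type}

/-- The set `C(u)` of children of `u`. -/
def children (T : ParentTree V) (u : V) : Set V := {v | T.parent v = u ∧ v ≠ u}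

/-- The set `T(u)` of descendants of `u` (including `u` itself). -/
def desc (T : ParentTree V) (u : V) : Set V := {b | ∃ k, T.parent^[k] b = u}

/-- For a set `U` of siblings, `T(U) = ⋃_{u ∈ U} T(u)`. -/
def descU (T : ParentTree V) (U : Set V) : Set V := ⋃ u ∈ U, T.desc u

end ParentTree

/-- The set of points occurring in a list. -/
def listSet {V : Type} (l : List V) : Set V := {x | x ∈ l}

/-- The weight of a path (a list of points), i.e. the sum of distances over
consecutive pairs. -/
def pathWeight {V X : Type} [MetricSpace X] (f : V → X) (l : List V) : ℝ :=
  ((l.zip l.tail).map fun p => dist (f p.1) (f p.2)).sum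

/-- The elements of `A` occur consecutively in the list `l`. -/
def ConsecutiveIn {V : Type} (A : Set V) (l : List V) : Prop :=
  ∃ m : List V, m <:+: l ∧ listSet m = A

/-- A path conforms to the rooted tree `T` if for every node `w` with
`T(w)` contained in the vertex set of the path, the elements of `T(w)` occur
consecutively in the path. -/
def PathConforms {V : Type} (T : ParentTree V) (l : List V) : Prop :=
  ∀ w : V, T.desc w ⊆ listSet l → ConsecutiveIn (T.desc w) l

/-- `DD T f u Vs a` : the minimum weight `D^u_{Vs}(a)` of a conforming path of
pairwise distinct points that starts at `u`, has vertex set `{u} ∪ T(Vs)`, and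
ends at `a`. -/
noncomputable def DD {V X : Type} [MetricSpace X] (T : ParentTree V) (f : V → X)
    (u : V) (Vs : Set V) (a : V) : ℝ :=
  sInf {w | ∃ l : List V, l.Nodup ∧ l.head? = some u ∧ l.getLast? = some a ∧
    listSet l = {u} ∪ T.descU Vs ∧ PathConforms T l ∧ pathWeight f l = w}

/-- `DW T f u Vs v Ws` : the minimum weight `D^u_{Vs,Ws}(v)` of a conforming path of
pairwise distinct points that starts at `u`, ends at `v`, has vertex set
`{u} ∪ T(Vs) ∪ T(Ws) ∪ {v}`, and in which `{u} ∪ T(Vs)` occurs as a prefix. -/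
noncomputable def DW {V X : Type} [MetricSpace X] (T : ParentTree V) (f : V → X)
    (u : V) (Vs : Set V) (v : V) (Ws : Set V) : ℝ :=
  sInf {w | ∃ l : List V, l.Nodup ∧ l.head? = some u ∧ l.getLast? = some v ∧
    listSet l = {u} ∪ T.descU Vs ∪ T.descU Ws ∪ {v} ∧ PathConforms T l ∧
    (∃ l₁ l₂ : List V, l = l₁ ++ l₂ ∧ listSet l₁ = {u} ∪ T.descU Vs) ∧
    pathWeight f l = w}

section Lists

variable {V : Type}

@[simp] lemma mem_listSet {x : V} {l : List V} : x ∈ listSet l ↔ x ∈ l := Iff.rfl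

@[simp] lemma listSet_nil : listSet ([] : List V) = ∅ := by ext; simp

@[simp] lemma listSet_cons (x : V) (l : List V) : listSet (x :: l) = insert x (listSet l) := by
  ext; simp

@[simp] lemma listSet_singleton (x : V) : listSet [x] = {x} := by ext; simp

@[simp] lemma listSet_append (l₁ l₂ : List V) :
    listSet (l₁ ++ l₂) = listSet l₁ ∪ listSet l₂ := by
  ext; simp

lemma disjoint_listSet_of_nodup_append {l₁ l₂ : List V} (h : (l₁ ++ l₂).Nodup) :
    Disjoint (listSet l₁) (listSet l₂) :=
  Set.disjoint_left.2 fun _ h₁ h₂ => List.disjoint_of_nodup_append h h₁ h₂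

lemma Set.eq_of_union_eq_of_disjoint {A B C : Set V} (h : A ∪ C = B ∪ C) (hA : Disjoint A C)
    (hB : Disjoint B C) : A = B := by
  rw [← hA.sup_sdiff_cancel_right, ← hB.sup_sdiff_cancel_right]
  exact congrArg (· \ C) h

lemma listSet_eq_of_listSet_cons_eq {x : V} {l : List V} {S : Set V}
    (h : listSet (x :: l) = {x} ∪ S) (hl : x ∉ l) (hS : x ∉ S) : listSet l = S := by
  refine Set.eq_of_union_eq_of_disjoint (C := {x}) ?_ (Set.disjoint_singleton_right.2 hl)
    (Set.disjoint_singleton_right.2 hS)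
  rw [Set.union_comm, ← Set.insert_eq, ← listSet_cons, h, Set.union_comm]

lemma listSet_eq_of_listSet_concat_eq {x : V} {l : List V} {S : Set V}
    (h : listSet (l ++ [x]) = S ∪ {x}) (hl : x ∉ l) (hS : x ∉ S) : listSet l = S := by
  refine Set.eq_of_union_eq_of_disjoint (C := {x}) ?_ (Set.disjoint_singleton_right.2 hl)
    (Set.disjoint_singleton_right.2 hS)
  rw [← h, listSet_append, listSet_singleton]

lemma ConsecutiveIn.mono {A : Set V} {l l' : List V} (h : ConsecutiveIn A l) (hl : l <:+: l') :
    ConsecutiveIn A l' :=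
  let ⟨m, hm, hmA⟩ := h
  ⟨m, hm.trans hl, hmA⟩

lemma pathWeight_nonneg {X : Type} [MetricSpace X] (f : V → X) (l : List V) :
    0 ≤ pathWeight f l :=
  List.sum_nonneg fun _ hx => by
    obtain ⟨_, -, rfl⟩ := List.mem_map.1 hx
    exact dist_nonneg

lemma pathWeight_append_cons {X : Type} [MetricSpace X] (f : V → X) (y : V) (ys : List V) :
    ∀ xs : List V, pathWeight f (xs ++ y :: ys) = pathWeight f (xs ++ [y]) + pathWeight f (y :: ys)
  | [] => by simp [pathWeight]
  | [x] => by simp [pathWeight]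
  | x :: x' :: xs => by
    have ih := pathWeight_append_cons f y ys (x' :: xs)
    simp only [List.cons_append, pathWeight, List.tail_cons, List.zip_cons_cons, List.map_cons,
      List.sum_cons] at ih ⊢
    rw [ih]
    ring

end Lists

namespace List

variable {α : Type*} {l l₁ l₂ m : List α} {a x : α}

theorem IsInfix.infix_or_infix_of_notMem (h : m <:+: l₁ ++ x :: l₂) (hx : x ∉ m) :
    m <:+: l₁ ∨ m <:+: l₂ := by
  obtain ⟨s, t, hst⟩ := h
  rcases append_eq_append_iff.1 hst with ⟨c, rfl, -⟩ | ⟨c, hsm, hxl⟩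
  · exact Or.inl ⟨s, c, rfl⟩
  rcases c with _ | ⟨y, c⟩
  · exact Or.inl ⟨s, [], by simpa using hsm⟩
  obtain ⟨rfl, rfl⟩ : x = y ∧ l₂ = c ++ t := by simpa using hxl
  rcases append_eq_append_iff.1 hsm with ⟨d, -, rfl⟩ | ⟨d, -, hd⟩
  · exact absurd (by simp) hx
  rcases d with _ | ⟨z, d⟩
  · obtain rfl : m = x :: c := by simpa using hd.symm
    exact absurd (by simp) hx
  obtain ⟨-, rfl⟩ : x = z ∧ c = d ++ m := by simpa using hd
  exact Or.inr ⟨d, t, by simp⟩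

theorem IsInfix.infix_left_of_nodup (h : m <:+: l₁ ++ l₂) (hnd : (l₁ ++ l₂).Nodup)
    (hm : ∀ y ∈ m, y ∈ l₁) : m <:+: l₁ := by
  have hm₂ : ∀ y ∈ m, y ∉ l₂ := fun y hy => disjoint_of_nodup_append hnd (hm y hy)
  obtain ⟨s, t, hst⟩ := h
  rcases append_eq_append_iff.1 hst with ⟨c, rfl, -⟩ | ⟨c, hsm, rfl⟩
  · exact ⟨s, c, rfl⟩
  rcases append_eq_append_iff.1 hsm with ⟨d, rfl, rfl⟩ | ⟨d, -, rfl⟩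
  · rcases c with _ | ⟨y, c⟩
    · exact ⟨s, [], by simp⟩
    · exact absurd (by simp) (hm₂ y (by simp))
  · rcases m with _ | ⟨y, m⟩
    · exact nil_infix
    · exact absurd (by simp) (hm₂ y (by simp))

theorem IsInfix.infix_right_of_nodup (h : m <:+: l₁ ++ l₂) (hnd : (l₁ ++ l₂).Nodup)
    (hm : ∀ y ∈ m, y ∈ l₂) : m <:+: l₂ := by
  have hm₁ : ∀ y ∈ m, y ∉ l₁ := fun y hy h₁ => disjoint_of_nodup_append hnd h₁ (hm y hy)
  obtain ⟨s, t, hst⟩ := h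
  rcases append_eq_append_iff.1 hst with ⟨c, rfl, -⟩ | ⟨c, hsm, rfl⟩
  · rcases m with _ | ⟨y, m⟩
    · exact nil_infix
    · exact absurd (by simp) (hm₁ y (by simp))
  rcases append_eq_append_iff.1 hsm with ⟨d, rfl, rfl⟩ | ⟨d, -, rfl⟩
  · rcases d with _ | ⟨y, d⟩
    · exact ⟨[], t, by simp⟩
    · exact absurd (by simp) (hm₁ y (by simp))
  · exact ⟨d, t, by simp⟩

theorem Nodup.eq_append_of_infix_of_getLast? (hnd : l.Nodup) (hl : l.getLast? = some a)
    (h : m <:+: l) (ha : a ∈ m) : ∃ s, l = s ++ m := by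
  obtain ⟨s, t, rfl⟩ := h
  refine ⟨s, ?_⟩
  rcases eq_nil_or_concat' t with rfl | ⟨t, b, rfl⟩
  · simp
  · obtain rfl : b = a := by simpa [← append_assoc] using hl
    exact absurd (mem_append_right _ (by simp)) (disjoint_of_nodup_append (l₁ := s ++ m)
      hnd (mem_append_right s ha))

end List

namespace ParentTree

variable {V : Type} (T : ParentTree V) {w x y c : V} {U U' : Set V}

lemma eq_root_of_iterate_eq_self {k : ℕ} (hk : 0 < k) (h : T.parent^[k] x = x) :
    x = T.root := by
  obtain ⟨j, hj⟩ := T.reaches_root x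
  have hperiodic : T.parent^[k * j] x = x := (Function.IsPeriodicPt.mul_const h j).eq
  rw [← hperiodic, ← Nat.sub_add_cancel (Nat.le_mul_of_pos_left j hk),
    Function.iterate_add_apply, hj, Function.iterate_fixed T.parent_root]

lemma mem_desc_self (w : V) : w ∈ T.desc w := ⟨0, rfl⟩

lemma mem_desc_trans (hxy : x ∈ T.desc y) (hyw : y ∈ T.desc w) : x ∈ T.desc w := by
  obtain ⟨i, hi⟩ := hxy
  obtain ⟨j, hj⟩ := hyw
  exact ⟨j + i, by rw [Function.iterate_add_apply, hi, hj]⟩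

lemma desc_subset_desc (h : x ∈ T.desc y) : T.desc x ⊆ T.desc y :=
  fun _ hz => T.mem_desc_trans hz h

lemma mem_desc_of_mem_children (hc : c ∈ T.children w) : c ∈ T.desc w := ⟨1, hc.1⟩

lemma parent_mem_desc (h : x ∈ T.desc y) (hne : x ≠ y) : T.parent x ∈ T.desc y := by
  obtain ⟨_ | k, hk⟩ := h
  · exact absurd hk hne
  · exact ⟨k, by rwa [← Function.iterate_succ_apply]⟩

/-- A cycle of the parent map can only pass through the root, which `parent` fixes. -/
lemma eq_of_mem_desc_of_mem_desc (hxy : x ∈ T.desc y) (hyx : y ∈ T.desc x) : x = y := by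
  obtain ⟨i, hi⟩ := hxy
  obtain ⟨j, hj⟩ := hyx
  by_contra hne
  have hpos : 0 < j + i := by
    rcases i with _ | i
    · exact absurd hi hne
    · omega
  have hroot := T.eq_root_of_iterate_eq_self hpos (by rw [Function.iterate_add_apply, hi, hj])
  rw [← hi, hroot, Function.iterate_fixed T.parent_root] at hne
  exact hne rfl

lemma notMem_desc_of_mem_desc (h : x ∈ T.desc y) (hne : x ≠ y) : y ∉ T.desc x :=
  fun h' => hne (T.eq_of_mem_desc_of_mem_desc h h')

lemma notMem_desc_of_mem_children (hc : c ∈ T.children w) : w ∉ T.desc c :=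
  T.notMem_desc_of_mem_desc (T.mem_desc_of_mem_children hc) hc.2

lemma mem_desc_or_mem_desc (hx : x ∈ T.desc y) (hx' : x ∈ T.desc w) :
    y ∈ T.desc w ∨ w ∈ T.desc y := by
  obtain ⟨i, rfl⟩ := hx
  obtain ⟨j, rfl⟩ := hx'
  rcases le_total i j with h | h
  · exact Or.inl ⟨j - i, by rw [← Function.iterate_add_apply, Nat.sub_add_cancel h]⟩
  · exact Or.inr ⟨i - j, by rw [← Function.iterate_add_apply, Nat.sub_add_cancel h]⟩

lemma disjoint_desc_of_mem_children {c' : V} (hc : c ∈ T.children w) (hc' : c' ∈ T.children w)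
    (hne : c ≠ c') : Disjoint (T.desc c) (T.desc c') := by
  refine Set.disjoint_left.2 fun x hx hx' => ?_
  rcases T.mem_desc_or_mem_desc hx hx' with h | h
  · have := T.parent_mem_desc h hne
    rw [hc.1] at this
    exact T.notMem_desc_of_mem_children hc' this
  · have := T.parent_mem_desc h hne.symm
    rw [hc'.1] at this
    exact T.notMem_desc_of_mem_children hc this

lemma exists_mem_children_of_mem_desc (hx : x ∈ T.desc w) (hne : x ≠ w) :
    ∃ c ∈ T.children w, x ∈ T.desc c := by
  obtain ⟨k, hk⟩ := hx
  induction k generalizing w with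
  | zero => exact absurd hk hne
  | succ k ih =>
    rw [Function.iterate_succ_apply'] at hk
    by_cases hcw : T.parent^[k] x = w
    · exact ih hne hcw
    · exact ⟨_, ⟨hk, hcw⟩, k, rfl⟩

lemma mem_descU : x ∈ T.descU U ↔ ∃ c ∈ U, x ∈ T.desc c := by simp [descU]

@[simp] lemma descU_empty : T.descU ∅ = ∅ := by simp [descU]

lemma descU_insert (c : V) (U : Set V) : T.descU (insert c U) = T.desc c ∪ T.descU U := by
  simp [descU]

lemma descU_union (U U' : Set V) : T.descU (U ∪ U') = T.descU U ∪ T.descU U' :=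
  Set.biUnion_union U U' T.desc

lemma desc_eq_insert_descU_children (w : V) :
    T.desc w = insert w (T.descU (T.children w)) := by
  ext x
  refine ⟨fun hx => ?_, ?_⟩
  · by_cases hxw : x = w
    · exact Or.inl hxw
    · exact Or.inr (T.mem_descU.2 (T.exists_mem_children_of_mem_desc hx hxw))
  · rintro (rfl | hx)
    · exact T.mem_desc_self x
    · obtain ⟨c, hc, hxc⟩ := T.mem_descU.1 hx
      exact T.mem_desc_trans hxc (T.mem_desc_of_mem_children hc)

lemma desc_subset_descU (hx : x ∈ T.descU U) : T.desc x ⊆ T.descU U := by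
  obtain ⟨c, hc, hxc⟩ := T.mem_descU.1 hx
  exact fun _ hy => T.mem_descU.2 ⟨c, hc, T.mem_desc_trans hy hxc⟩

lemma descU_subset_desc (hU : U ⊆ T.children w) : T.descU U ⊆ T.desc w := fun _ hx =>
  let ⟨_, hc, hxc⟩ := T.mem_descU.1 hx
  T.mem_desc_trans hxc (T.mem_desc_of_mem_children (hU hc))

lemma notMem_descU (hU : U ⊆ T.children w) : w ∉ T.descU U := fun hw =>
  let ⟨_, hc, hwc⟩ := T.mem_descU.1 hw
  T.notMem_desc_of_mem_children (hU hc) hwc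

lemma disjoint_descU (hU : U ⊆ T.children w) (hU' : U' ⊆ T.children w) (hd : Disjoint U U') :
    Disjoint (T.descU U) (T.descU U') := by
  refine Set.disjoint_left.2 fun x hx hx' => ?_
  obtain ⟨c, hc, hxc⟩ := T.mem_descU.1 hx
  obtain ⟨c', hc', hxc'⟩ := T.mem_descU.1 hx'
  have hne : c ≠ c' := fun h => Set.disjoint_left.1 hd hc (h ▸ hc')
  exact Set.disjoint_left.1 (T.disjoint_desc_of_mem_children (hU hc) (hU' hc') hne) hxc hxc'

lemma disjoint_desc_descU (hc : c ∈ T.children w) (hU : U ⊆ T.children w) (hcU : c ∉ U) :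
    Disjoint (T.desc c) (T.descU U) := by
  simpa [descU] using
    T.disjoint_descU (Set.singleton_subset_iff.2 hc) hU (Set.disjoint_singleton_left.2 hcU)

lemma ncard_desc_lt [Finite V] (hc : c ∈ T.children w) : (T.desc c).ncard < (T.desc w).ncard :=
  Set.ncard_lt_ncard <| (Set.ssubset_iff_of_subset
    (T.desc_subset_desc (T.mem_desc_of_mem_children hc))).2
      ⟨w, T.mem_desc_self w, T.notMem_desc_of_mem_children hc⟩

end ParentTree

namespace ParentTree

variable {V : Type} (T : ParentTree V)

def Separated (A B : Set V) : Prop := ∀ w ∈ A, Disjoint (T.desc w) B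

variable {T} {A B : Set V} {x : V}

lemma Separated.disjoint (h : T.Separated A B) : Disjoint A B :=
  Set.disjoint_left.2 fun w hw => Set.disjoint_left.1 (h w hw) (T.mem_desc_self w)

lemma Separated.desc_subset (h : T.Separated A B) {w : V} (hw : w ∈ A)
    (hsub : T.desc w ⊆ A ∪ B) : T.desc w ⊆ A :=
  Disjoint.subset_left_of_subset_union hsub (h w hw)

/-- Inside `T(x)`, only `x` itself has `x` as a descendant. -/
lemma Separated.insert (h : T.Separated A B) (hA : A ⊆ T.desc x) (hx : x ∉ A) :
    T.Separated A (insert x B) := fun w hw =>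
  Set.disjoint_insert_right.2
    ⟨T.notMem_desc_of_mem_desc (hA hw) (fun h => hx (h ▸ hw)), h w hw⟩

lemma separated_of_subset_desc (hA : A ⊆ T.desc x) (hB : Disjoint (T.desc x) B) :
    T.Separated A B := fun _ hw => hB.mono_left (T.desc_subset_desc (hA hw))

lemma separated_of_subset_descU {U : Set V} (hA : A ⊆ T.descU U) (hB : Disjoint (T.descU U) B) :
    T.Separated A B := fun _ hw => hB.mono_left (T.desc_subset_descU (hA hw))

@[simp] lemma separated_empty_left : T.Separated ∅ B := fun _ h => absurd h (Set.notMem_empty _)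

@[simp] lemma separated_empty_right : T.Separated A ∅ := fun _ _ => Set.disjoint_empty _

end ParentTree

structure IsConformingOrder {V : Type} (T : ParentTree V) (S : Set V) (l : List V) : Prop where
  nodup : l.Nodup
  listSet_eq : listSet l = S
  conforms : PathConforms T l

section Conforming

variable {V : Type} {T : ParentTree V} {l l₁ l₂ : List V} {S S₁ S₂ : Set V} {x : V}

lemma PathConforms.of_append_left (h : PathConforms T (l₁ ++ l₂)) (hnd : (l₁ ++ l₂).Nodup) :
    PathConforms T l₁ := fun w hw =>
  let ⟨m, hm, hmw⟩ := h w (hw.trans (by simp))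
  ⟨m, hm.infix_left_of_nodup hnd fun _ hy => hw (hmw ▸ hy), hmw⟩

lemma PathConforms.of_append_right (h : PathConforms T (l₁ ++ l₂)) (hnd : (l₁ ++ l₂).Nodup) :
    PathConforms T l₂ := fun w hw =>
  let ⟨m, hm, hmw⟩ := h w (hw.trans (by simp))
  ⟨m, hm.infix_right_of_nodup hnd fun _ hy => hw (hmw ▸ hy), hmw⟩

lemma PathConforms.desc_subset_or {w : V} (h : PathConforms T (l₁ ++ x :: l₂))
    (hw : T.desc w ⊆ listSet (l₁ ++ x :: l₂)) (hx : x ∉ T.desc w) :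
    T.desc w ⊆ listSet l₁ ∨ T.desc w ⊆ listSet l₂ := by
  obtain ⟨m, hm, hmw⟩ := h w hw
  rw [← hmw] at hx ⊢
  exact (hm.infix_or_infix_of_notMem hx).imp (fun h _ hy => h.subset hy) fun h _ hy => h.subset hy

namespace IsConformingOrder

lemma of_append_left (h : IsConformingOrder T S (l₁ ++ l₂)) :
    IsConformingOrder T (listSet l₁) l₁ :=
  ⟨h.nodup.of_append_left, rfl, h.conforms.of_append_left h.nodup⟩

lemma of_append_right (h : IsConformingOrder T S (l₁ ++ l₂)) :
    IsConformingOrder T (listSet l₂) l₂ :=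
  ⟨h.nodup.of_append_right, rfl, h.conforms.of_append_right h.nodup⟩

lemma nil : IsConformingOrder T ∅ [] :=
  ⟨List.nodup_nil, listSet_nil, fun w hw => absurd (hw (T.mem_desc_self w)) (by simp)⟩

lemma append (h₁ : IsConformingOrder T S₁ l₁) (h₂ : IsConformingOrder T S₂ l₂)
    (hs₁ : T.Separated S₁ S₂) (hs₂ : T.Separated S₂ S₁) :
    IsConformingOrder T (S₁ ∪ S₂) (l₁ ++ l₂) := by
  have hset : listSet (l₁ ++ l₂) = S₁ ∪ S₂ := by simp [h₁.listSet_eq, h₂.listSet_eq]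
  refine ⟨List.nodup_append.2 ⟨h₁.nodup, h₂.nodup, fun a ha b hb hab => ?_⟩, hset, fun w hw => ?_⟩
  · have hd : Disjoint (listSet l₁) (listSet l₂) := by
      rw [h₁.listSet_eq, h₂.listSet_eq]
      exact hs₁.disjoint
    exact Set.disjoint_left.1 hd ha (hab ▸ hb)
  rw [hset] at hw
  rcases hw (T.mem_desc_self w) with hw₁ | hw₂
  · exact (h₁.conforms w (h₁.listSet_eq ▸ hs₁.desc_subset hw₁ hw)).mono
      (List.prefix_append _ _).isInfix
  · exact (h₂.conforms w (h₂.listSet_eq ▸ hs₂.desc_subset hw₂ (Set.union_comm S₁ S₂ ▸ hw))).mono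
      (List.suffix_append _ _).isInfix

lemma append_cons (h₁ : IsConformingOrder T S₁ l₁) (h₂ : IsConformingOrder T S₂ l₂)
    (hs₁ : T.Separated S₁ S₂) (hs₂ : T.Separated S₂ S₁) (hS₁ : S₁ ⊆ T.desc x)
    (hS₂ : S₂ ⊆ T.desc x) (hx₁ : x ∉ S₁) (hx₂ : x ∉ S₂) :
    IsConformingOrder T (insert x (S₁ ∪ S₂)) (l₁ ++ x :: l₂) := by
  have h := h₁.append h₂ hs₁ hs₂
  have hset : listSet (l₁ ++ x :: l₂) = insert x (S₁ ∪ S₂) := by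
    simp [h₁.listSet_eq, h₂.listSet_eq, Set.union_insert]
  refine ⟨List.nodup_middle.2 (List.nodup_cons.2 ⟨fun hx => ?_, h.nodup⟩), hset, fun w hw => ?_⟩
  · rcases List.mem_append.1 hx with hx | hx
    · exact hx₁ (h₁.listSet_eq ▸ hx)
    · exact hx₂ (h₂.listSet_eq ▸ hx)
  rw [hset] at hw
  rcases hw (T.mem_desc_self w) with rfl | hw₁ | hw₂
  · refine ⟨_, List.infix_refl _, hset ▸ (Set.insert_subset (T.mem_desc_self w)
      (Set.union_subset hS₁ hS₂)).antisymm hw⟩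
  · refine (h₁.conforms w (h₁.listSet_eq ▸ (hs₁.insert hS₁ hx₁).desc_subset hw₁
      (hw.trans fun y => ?_))).mono (List.prefix_append _ _).isInfix
    simp only [Set.mem_insert_iff, Set.mem_union]
    tauto
  · refine (h₂.conforms w (h₂.listSet_eq ▸ (hs₂.insert hS₂ hx₂).desc_subset hw₂
      (hw.trans fun y => ?_))).mono ((List.suffix_cons _ _).trans (List.suffix_append _ _)).isInfix
    simp only [Set.mem_insert_iff, Set.mem_union]
    tauto

lemma cons (h : IsConformingOrder T S l) (hS : S ⊆ T.desc x) (hx : x ∉ S) :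
    IsConformingOrder T (insert x S) (x :: l) := by
  simpa using nil.append_cons h (by simp) (by simp) (Set.empty_subset _) hS
    (Set.notMem_empty x) hx

end IsConformingOrder

end Conforming

namespace ParentTree

variable {V : Type} [Fintype V] (T : ParentTree V) {w a c : V} {U : Set V}

lemma exists_isConformingOrder_descU_of_forall (hU : U ⊆ T.children w)
    (h : ∀ c ∈ U, ∃ l, IsConformingOrder T (T.desc c) l) :
    ∃ l, IsConformingOrder T (T.descU U) l := by
  induction U, U.toFinite using Set.Finite.induction_on with
  | empty => exact ⟨[], by simpa using IsConformingOrder.nil⟩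
  | @insert c U hcU _ ih =>
    have hU' : U ⊆ T.children w := (Set.subset_insert c U).trans hU
    obtain ⟨lc, hlc⟩ := h c (Set.mem_insert c U)
    obtain ⟨lU, hlU⟩ := ih hU' fun c' hc' => h c' (Set.mem_insert_of_mem c hc')
    have hd := T.disjoint_desc_descU (hU (Set.mem_insert c U)) hU' hcU
    exact ⟨lc ++ lU, T.descU_insert c U ▸ hlc.append hlU
      (T.separated_of_subset_desc subset_rfl hd) (T.separated_of_subset_descU subset_rfl hd.symm)⟩

lemma exists_isConformingOrder_desc (w : V) : ∃ l, IsConformingOrder T (T.desc w) l := by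
  induction hn : (T.desc w).ncard using Nat.strong_induction_on generalizing w with
  | _ n ih =>
  obtain ⟨l, hl⟩ := T.exists_isConformingOrder_descU_of_forall subset_rfl
    fun c hc => ih _ (hn ▸ T.ncard_desc_lt hc) c rfl
  exact ⟨w :: l, T.desc_eq_insert_descU_children w ▸
    hl.cons (T.descU_subset_desc subset_rfl) (T.notMem_descU subset_rfl)⟩

lemma exists_isConformingOrder_descU (hU : U ⊆ T.children w) :
    ∃ l, IsConformingOrder T (T.descU U) l :=
  T.exists_isConformingOrder_descU_of_forall hU fun c _ => T.exists_isConformingOrder_desc c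

lemma exists_isConformingOrder_descU_getLast? (hU : U ⊆ T.children w) (hc : c ∈ U) {l : List V}
    (hl : IsConformingOrder T (T.desc c) l) (hla : l.getLast? = some a) :
    ∃ l', IsConformingOrder T (T.descU U) l' ∧ l'.getLast? = some a := by
  have hU' : U \ {c} ⊆ T.children w := Set.sdiff_subset.trans hU
  obtain ⟨l₀, hl₀⟩ := T.exists_isConformingOrder_descU hU'
  have hd := T.disjoint_desc_descU (hU hc) hU' (fun h => h.2 rfl)
  have hset : T.descU U = T.descU (U \ {c}) ∪ T.desc c := by
    rw [Set.union_comm, ← descU_insert, Set.insert_sdiff_singleton, Set.insert_eq_of_mem hc]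
  refine ⟨l₀ ++ l, hset ▸ hl₀.append hl (T.separated_of_subset_descU subset_rfl hd.symm)
    (T.separated_of_subset_desc subset_rfl hd), by simp [List.getLast?_append, hla]⟩

lemma exists_isConformingOrder_desc_getLast? (ha : a ∈ T.desc w) :
    ∃ l, IsConformingOrder T (T.desc w) l ∧ l.getLast? = some a := by
  obtain ⟨k, hk⟩ := ha
  induction k generalizing w with
  | zero =>
    subst hk
    obtain ⟨l, hl⟩ := T.exists_isConformingOrder_descU (subset_refl (T.children a))
    refine ⟨l ++ [a], ?_, by simp⟩
    simpa [← T.desc_eq_insert_descU_children] using hl.append_cons IsConformingOrder.nil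
      (by simp) (by simp) (T.descU_subset_desc subset_rfl) (Set.empty_subset _)
      (T.notMem_descU subset_rfl) (Set.notMem_empty a)
  | succ k ih =>
    rw [Function.iterate_succ_apply'] at hk
    by_cases hcw : T.parent^[k] a = w
    · exact ih hcw
    obtain ⟨l, hl, hla⟩ := ih rfl
    obtain ⟨l', hl', hla'⟩ :=
      T.exists_isConformingOrder_descU_getLast? subset_rfl ⟨hk, hcw⟩ hl hla
    refine ⟨w :: l', T.desc_eq_insert_descU_children w ▸
      hl'.cons (T.descU_subset_desc subset_rfl) (T.notMem_descU subset_rfl), ?_⟩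
    cases l' with
    | nil => simp at hla'
    | cons b l' => simpa using hla'

end ParentTree

structure IsDPath {V : Type} (T : ParentTree V) (u : V) (Vs : Set V) (a : V) (l : List V) :
    Prop where
  isConformingOrder : IsConformingOrder T ({u} ∪ T.descU Vs) l
  head?_eq : l.head? = some u
  getLast?_eq : l.getLast? = some a

structure IsDWPath {V : Type} (T : ParentTree V) (u : V) (Vs : Set V) (v : V) (W : Set V)
    (l : List V) : Prop where
  isConformingOrder : IsConformingOrder T ({u} ∪ T.descU Vs ∪ T.descU W ∪ {v}) l
  head?_eq : l.head? = some u
  getLast?_eq : l.getLast? = some v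
  exists_prefix : ∃ l₁ l₂, l = l₁ ++ l₂ ∧ listSet l₁ = {u} ∪ T.descU Vs

section Minimum

variable {V X : Type} [MetricSpace X] (f : V → X) {P : List V → Prop} {l : List V}

lemma sInf_pathWeight_le (hl : P l) : sInf (pathWeight f '' {l | P l}) ≤ pathWeight f l :=
  csInf_le ⟨0, by rintro _ ⟨l, -, rfl⟩; exact pathWeight_nonneg f l⟩ ⟨l, hl, rfl⟩

lemma exists_pathWeight_eq_sInf [Fintype V] (hP : ∀ l, P l → l.Nodup) (hl : P l) :
    ∃ l, P l ∧ pathWeight f l = sInf (pathWeight f '' {l | P l}) := by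
  have hfin : {l | P l}.Finite := (List.finite_length_le V (Fintype.card V)).subset
    fun l hl => (hP l hl).length_le_card
  exact ((Set.Nonempty.image _ ⟨l, hl⟩).csInf_mem (hfin.image _))

variable (T : ParentTree V) {u v a : V} {Vs W : Set V}

lemma DD_eq_sInf (u : V) (Vs : Set V) (a : V) :
    DD T f u Vs a = sInf (pathWeight f '' {l | IsDPath T u Vs a l}) := by
  unfold DD
  congr 1
  ext r
  constructor
  · rintro ⟨l, hnd, hh, hl, hs, hc, rfl⟩
    exact ⟨l, ⟨⟨hnd, hs, hc⟩, hh, hl⟩, rfl⟩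
  · rintro ⟨l, ⟨⟨hnd, hs, hc⟩, hh, hl⟩, rfl⟩
    exact ⟨l, hnd, hh, hl, hs, hc, rfl⟩

lemma DW_eq_sInf (u : V) (Vs : Set V) (v : V) (W : Set V) :
    DW T f u Vs v W = sInf (pathWeight f '' {l | IsDWPath T u Vs v W l}) := by
  unfold DW
  congr 1
  ext r
  constructor
  · rintro ⟨l, hnd, hh, hl, hs, hc, hp, rfl⟩
    exact ⟨l, ⟨⟨hnd, hs, hc⟩, hh, hl, hp⟩, rfl⟩
  · rintro ⟨l, ⟨⟨hnd, hs, hc⟩, hh, hl, hp⟩, rfl⟩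
    exact ⟨l, hnd, hh, hl, hs, hc, hp, rfl⟩

lemma DD_le_pathWeight (hl : IsDPath T u Vs a l) : DD T f u Vs a ≤ pathWeight f l := by
  rw [DD_eq_sInf]
  exact sInf_pathWeight_le f hl

lemma DW_le_pathWeight (hl : IsDWPath T u Vs v W l) : DW T f u Vs v W ≤ pathWeight f l := by
  rw [DW_eq_sInf]
  exact sInf_pathWeight_le f hl

lemma DD_nonneg (u : V) (Vs : Set V) (a : V) : 0 ≤ DD T f u Vs a :=
  Real.sInf_nonneg (by rintro _ ⟨l, -, -, -, -, -, rfl⟩; exact pathWeight_nonneg f l)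

lemma DW_nonneg (u : V) (Vs : Set V) (v : V) (W : Set V) : 0 ≤ DW T f u Vs v W :=
  Real.sInf_nonneg (by rintro _ ⟨l, -, -, -, -, -, -, rfl⟩; exact pathWeight_nonneg f l)

end Minimum

namespace ParentTree

variable {V : Type} (T : ParentTree V) {v : V} {A B : Set V}

lemma exists_partition_children (hAB : Disjoint A B) (hA : A ⊆ T.descU (T.children v))
    (hB : B ⊆ T.descU (T.children v))
    (hside : ∀ c ∈ T.children v, T.desc c ⊆ A ∨ T.desc c ⊆ B) :
    ∃ W W', W ∪ W' = T.children v ∧ Disjoint W W' ∧ A = T.descU W ∧ B = T.descU W' := by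
  have key : ∀ {A B : Set V}, Disjoint A B → A ⊆ T.descU (T.children v) →
      (∀ c ∈ T.children v, T.desc c ⊆ A ∨ T.desc c ⊆ B) →
      A = T.descU {c ∈ T.children v | T.desc c ⊆ A} := by
    intro A B hAB hA hside
    refine subset_antisymm (fun x hx => ?_) fun x hx => ?_
    · obtain ⟨c, hc, hxc⟩ := T.mem_descU.1 (hA hx)
      refine T.mem_descU.2 ⟨c, ⟨hc, ?_⟩, hxc⟩
      exact (hside c hc).resolve_right fun hcB => Set.disjoint_left.1 hAB hx (hcB hxc)
    · obtain ⟨c, hc, hxc⟩ := T.mem_descU.1 hx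
      exact hc.2 hxc
  refine ⟨{c ∈ T.children v | T.desc c ⊆ A}, {c ∈ T.children v | T.desc c ⊆ B}, ?_, ?_,
    key hAB hA hside, key hAB.symm hB fun c hc => (hside c hc).symm⟩
  · ext c
    exact ⟨fun h => h.elim And.left And.left, fun hc => (hside c hc).imp (⟨hc, ·⟩) (⟨hc, ·⟩)⟩
  · exact Set.disjoint_left.2 fun c hcA hcB =>
      Set.disjoint_left.1 hAB (hcA.2 (T.mem_desc_self c)) (hcB.2 (T.mem_desc_self c))

end ParentTree

section Paths

variable {V : Type} {T : ParentTree V} {u v a : V} {Vs W W' : Set V} {l : List V}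

lemma disjoint_singleton_union_descU_desc (hVs : Vs ⊆ T.children u) (hv : v ∈ T.children u)
    (hvVs : v ∉ Vs) : Disjoint ({u} ∪ T.descU Vs) (T.desc v) :=
  Set.disjoint_union_left.2 ⟨Set.disjoint_singleton_left.2 (T.notMem_desc_of_mem_children hv),
    (T.disjoint_desc_descU hv hVs hvVs).symm⟩

lemma isConformingOrder_cons_append_append_cons (hVs : Vs ⊆ T.children u)
    (hv : v ∈ T.children u) (hvVs : v ∉ Vs) (hW : W ⊆ T.children v) (hW' : W' ⊆ T.children v)
    (hWW' : Disjoint W W') {α β t : List V} (hα : IsConformingOrder T (T.descU Vs) α)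
    (hβ : IsConformingOrder T (T.descU W) β) (ht : IsConformingOrder T (T.descU W') t) :
    IsConformingOrder T (insert u (T.descU Vs ∪ insert v (T.descU W ∪ T.descU W')))
      (u :: (α ++ (β ++ v :: t))) := by
  have hd := T.disjoint_descU hW hW' hWW'
  have hβt := hβ.append_cons ht (T.separated_of_subset_descU subset_rfl hd)
    (T.separated_of_subset_descU subset_rfl hd.symm) (T.descU_subset_desc hW)
    (T.descU_subset_desc hW') (T.notMem_descU hW) (T.notMem_descU hW')
  have hsub : insert v (T.descU W ∪ T.descU W') ⊆ T.desc v := Set.insert_subset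
    (T.mem_desc_self v) (Set.union_subset (T.descU_subset_desc hW) (T.descU_subset_desc hW'))
  have hvVs' := T.disjoint_desc_descU hv hVs hvVs
  refine (hα.append hβt (T.separated_of_subset_descU subset_rfl (hvVs'.symm.mono_right hsub))
    (T.separated_of_subset_desc hsub hvVs')).cons (Set.union_subset (T.descU_subset_desc hVs)
      (hsub.trans (T.desc_subset_desc (T.mem_desc_of_mem_children hv)))) ?_
  rintro (hu | hu)
  · exact T.notMem_descU hVs hu
  · exact T.notMem_desc_of_mem_children hv (hsub hu)

lemma exists_isDWPath [Fintype V] (hVs : Vs ⊆ T.children u) (hv : v ∈ T.children u) (hvVs : v ∉ Vs)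
    (hW : W ⊆ T.children v) : ∃ p, IsDWPath T u Vs v W p := by
  obtain ⟨α, hα⟩ := T.exists_isConformingOrder_descU hVs
  obtain ⟨β, hβ⟩ := T.exists_isConformingOrder_descU hW
  have h := isConformingOrder_cons_append_append_cons hVs hv hvVs hW (Set.empty_subset _)
    (Set.disjoint_empty _) hα hβ (by simpa using IsConformingOrder.nil)
  refine ⟨u :: (α ++ (β ++ [v])), ⟨?_, rfl, ?_, u :: α, β ++ [v], rfl,
    by rw [listSet_cons, hα.listSet_eq, Set.singleton_union]⟩⟩
  · convert h using 1
    ext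
    simp only [Set.mem_union, Set.mem_insert_iff, Set.mem_singleton_iff, T.descU_empty,
      Set.union_empty]
    tauto
  · rw [← List.cons_append, ← List.append_assoc, List.getLast?_concat]

lemma exists_isDPath [Fintype V] (hW' : W' ⊆ T.children v) (ha : a ∈ T.descU W') :
    ∃ q, IsDPath T v W' a q := by
  obtain ⟨c, hc, hac⟩ := T.mem_descU.1 ha
  obtain ⟨l, hl, hla⟩ := T.exists_isConformingOrder_desc_getLast? hac
  obtain ⟨γ, hγ, hγa⟩ := T.exists_isConformingOrder_descU_getLast? hW' hc hl hla
  refine ⟨v :: γ, ⟨Set.singleton_union ▸ hγ.cons (T.descU_subset_desc hW') (T.notMem_descU hW'),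
    rfl, ?_⟩⟩
  cases γ with
  | nil => simp at hγa
  | cons b γ => simpa using hγa

lemma IsDPath.exists_append (hVs : Vs ⊆ T.children u) (hv : v ∈ T.children u) (hvVs : v ∉ Vs)
    (hl : IsDPath T u (insert v Vs) a l) (ha : a ∈ T.desc v) :
    ∃ s m, l = s ++ m ∧ listSet s = {u} ∪ T.descU Vs ∧ listSet m = T.desc v := by
  have hset : listSet l = ({u} ∪ T.descU Vs) ∪ T.desc v := by
    rw [hl.1.listSet_eq, T.descU_insert, Set.union_comm (T.desc v), Set.union_assoc]
  obtain ⟨m, hm, hmv⟩ := hl.1.conforms v (hset ▸ Set.subset_union_right)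
  obtain ⟨s, rfl⟩ := hl.1.nodup.eq_append_of_infix_of_getLast? hl.getLast?_eq hm
    (show a ∈ listSet m from hmv ▸ ha)
  refine ⟨s, m, rfl, ?_, hmv⟩
  have hsm := disjoint_listSet_of_nodup_append hl.1.nodup
  rw [listSet_append] at hset
  rw [hmv] at hset hsm
  exact Set.eq_of_union_eq_of_disjoint hset hsm (disjoint_singleton_union_descU_desc hVs hv hvVs)

lemma isDPath_insert_iff (hVs : Vs ⊆ T.children u) (hv : v ∈ T.children u) (hvVs : v ∉ Vs) :
    IsDPath T u (insert v Vs) v l ↔ IsDWPath T u Vs v (T.children v) l := by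
  have hset : {u} ∪ T.descU (insert v Vs) =
      {u} ∪ T.descU Vs ∪ T.descU (T.children v) ∪ {v} := by
    rw [T.descU_insert, T.desc_eq_insert_descU_children]
    ext
    simp only [Set.mem_union, Set.mem_insert_iff, Set.mem_singleton_iff]
    tauto
  refine ⟨fun hl => ⟨hset ▸ hl.1, hl.2, hl.3, ?_⟩, fun hl => ⟨hset ▸ hl.1, hl.2, hl.3⟩⟩
  obtain ⟨s, m, hsm, hs, -⟩ := hl.exists_append hVs hv hvVs (T.mem_desc_self v)
  exact ⟨s, m, hsm, hs⟩

end Paths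

section Recurrence

variable {V : Type} {T : ParentTree V} {u v a : V} {Vs W W' : Set V} {l s m₁ m₂ : List V}

lemma IsDPath.isDWPath_of_eq_append (hl : IsDPath T u (insert v Vs) a (s ++ m₁ ++ v :: m₂))
    (hs : listSet s = {u} ∪ T.descU Vs) (hm₁ : listSet m₁ = T.descU W) :
    IsDWPath T u Vs v W (s ++ m₁ ++ [v]) := by
  have e : s ++ m₁ ++ v :: m₂ = s ++ m₁ ++ [v] ++ m₂ := by simp
  have hset : listSet (s ++ m₁ ++ [v]) = {u} ∪ T.descU Vs ∪ T.descU W ∪ {v} := by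
    simp only [listSet_append, listSet_singleton, hs, hm₁]
  refine ⟨hset ▸ (e ▸ hl.1).of_append_left, ?_, by simp, s, m₁ ++ [v], by simp, hs⟩
  obtain ⟨x, s, rfl⟩ := List.exists_cons_of_ne_nil
    (List.ne_nil_of_mem (show u ∈ listSet s by simp [hs]))
  simpa using hl.head?_eq

lemma IsDPath.isDPath_of_eq_append (hl : IsDPath T u (insert v Vs) a (s ++ m₁ ++ v :: m₂))
    (hm₂ : listSet m₂ = T.descU W') : IsDPath T v W' a (v :: m₂) :=
  ⟨(by rw [listSet_cons, hm₂, Set.singleton_union] : listSet (v :: m₂) = {v} ∪ T.descU W') ▸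
    hl.1.of_append_right, rfl,
    (List.getLast?_append_cons _ _ _).symm.trans hl.getLast?_eq⟩

lemma IsDPath.exists_isDWPath_isDPath {X : Type} [MetricSpace X] (f : V → X)
    (hVs : Vs ⊆ T.children u) (hv : v ∈ T.children u) (hvVs : v ∉ Vs) (ha : a ∈ T.desc v)
    (hav : a ≠ v) (hl : IsDPath T u (insert v Vs) a l) :
    ∃ W W' p q, W ∪ W' = T.children v ∧ Disjoint W W' ∧ a ∈ T.descU W' ∧
      IsDWPath T u Vs v W p ∧ IsDPath T v W' a q ∧
      pathWeight f l = pathWeight f p + pathWeight f q := by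
  obtain ⟨s, m, rfl, hs, hm⟩ := hl.exists_append hVs hv hvVs ha
  obtain ⟨m₁, m₂, rfl⟩ := List.append_of_mem (show v ∈ listSet m from hm ▸ T.mem_desc_self v)
  have hvm : (v :: (m₁ ++ m₂)).Nodup := List.nodup_middle.1 hl.1.nodup.of_append_right
  have hm₁₂ : ∀ x ∈ m₁ ++ m₂, x ∈ T.descU (T.children v) := fun x hx => by
    have hxv : x ∈ T.desc v := hm ▸ (show x ∈ listSet (m₁ ++ v :: m₂) from
      List.mem_append.2 ((List.mem_append.1 hx).imp id (List.mem_cons_of_mem v)))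
    rw [T.desc_eq_insert_descU_children] at hxv
    exact hxv.resolve_left fun h => (List.nodup_cons.1 hvm).1 (h ▸ hx)
  rw [← List.append_assoc] at hl
  have hside : ∀ c ∈ T.children v, T.desc c ⊆ listSet m₁ ∨ T.desc c ⊆ listSet m₂ := by
    intro c hc
    have hcv := T.desc_subset_desc (T.mem_desc_of_mem_children hc)
    have hcl : T.desc c ⊆ listSet (s ++ m₁ ++ v :: m₂) := hcv.trans <| hm ▸ fun x => by
      simp only [mem_listSet, List.mem_append, List.mem_cons]
      tauto
    refine (hl.1.conforms.desc_subset_or hcl (T.notMem_desc_of_mem_children hc)).imp_left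
      fun h => Disjoint.subset_right_of_subset_union (by simpa using h) ?_
    exact (hs ▸ disjoint_singleton_union_descU_desc hVs hv hvVs).symm.mono_left hcv
  obtain ⟨W, W', hWW', hd, h₁, h₂⟩ := T.exists_partition_children
    (disjoint_listSet_of_nodup_append hvm.of_cons) (fun x hx => hm₁₂ x (List.mem_append_left _ hx))
    (fun x hx => hm₁₂ x (List.mem_append_right _ hx)) hside
  have ham₂ : a ∈ m₂ := by
    have := List.mem_of_getLast? ((List.getLast?_append_cons _ _ _).symm.trans hl.getLast?_eq)
    exact (List.mem_cons.1 this).resolve_left hav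
  refine ⟨W, W', _, _, hWW', hd, h₂ ▸ ham₂, hl.isDWPath_of_eq_append hs h₁,
    hl.isDPath_of_eq_append h₂, ?_⟩
  rw [← List.append_assoc, pathWeight_append_cons]

lemma IsDWPath.exists_eq (hVs : Vs ⊆ T.children u) (hv : v ∈ T.children u) (hvVs : v ∉ Vs)
    (hW : W ⊆ T.children v) {p : List V} (hp : IsDWPath T u Vs v W p) :
    ∃ α β, p = u :: (α ++ (β ++ [v])) ∧ IsConformingOrder T (T.descU Vs) α ∧
      IsConformingOrder T (T.descU W) β := by
  have hhead := disjoint_singleton_union_descU_desc hVs hv hvVs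
  obtain ⟨p₁, p₂, rfl, hp₁⟩ := hp.exists_prefix
  obtain ⟨x, α, rfl⟩ := List.exists_cons_of_ne_nil
    (List.ne_nil_of_mem (show u ∈ listSet p₁ by simp [hp₁]))
  obtain rfl : x = u := by simpa using hp.head?_eq
  rcases List.eq_nil_or_concat' p₂ with rfl | ⟨β, y, rfl⟩
  · have hvp : v ∈ listSet (x :: α) := List.mem_of_getLast? (by simpa using hp.getLast?_eq)
    exact absurd (T.mem_desc_self v) (Set.disjoint_left.1 hhead (hp₁ ▸ hvp))
  obtain rfl : y = v := by
    have hlast := hp.getLast?_eq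
    rw [← List.append_assoc, List.getLast?_concat] at hlast
    exact Option.some_inj.1 hlast
  have hnd := hp.1.nodup
  have hα := listSet_eq_of_listSet_cons_eq hp₁ (List.nodup_cons.1 hnd.of_append_left).1
    (T.notMem_descU hVs)
  have hβy : listSet (β ++ [y]) = T.descU W ∪ {y} := by
    have hWy : T.descU W ∪ {y} ⊆ T.desc y :=
      Set.union_subset (T.descU_subset_desc hW) (Set.singleton_subset_iff.2 (T.mem_desc_self y))
    refine Set.eq_of_union_eq_of_disjoint (C := listSet (x :: α)) ?_
      (disjoint_listSet_of_nodup_append hnd).symm (hp₁ ▸ hhead.symm.mono_left hWy)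
    rw [Set.union_comm, ← listSet_append, hp.1.listSet_eq, hp₁, Set.union_assoc _ (T.descU W),
      Set.union_comm]
  have hβ := listSet_eq_of_listSet_concat_eq hβy
    (fun h => (List.nodup_append.1 hnd.of_append_right).2.2 y h y (List.mem_singleton_self y) rfl)
    (T.notMem_descU hW)
  exact ⟨α, β, rfl, hα ▸ hp.1.of_append_left.of_append_right (l₁ := [x]),
    hβ ▸ hp.1.of_append_right.of_append_left⟩

lemma IsDPath.exists_eq_cons (hW' : W' ⊆ T.children v) (hav : a ≠ v) {q : List V}
    (hq : IsDPath T v W' a q) :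
    ∃ t, q = v :: t ∧ IsConformingOrder T (T.descU W') t ∧ t.getLast? = some a := by
  obtain ⟨t, rfl⟩ := List.head?_eq_some_iff.1 hq.head?_eq
  have ht := listSet_eq_of_listSet_cons_eq hq.1.listSet_eq (List.nodup_cons.1 hq.1.nodup).1
    (T.notMem_descU hW')
  refine ⟨t, rfl, ht ▸ hq.1.of_append_right (l₁ := [v]), ?_⟩
  · cases t with
    | nil => exact absurd (by simpa using hq.getLast?_eq : v = a).symm hav
    | cons b t => simpa using hq.getLast?_eq

lemma IsDWPath.exists_isDPath_insert {X : Type} [MetricSpace X] (f : V → X)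
    (hVs : Vs ⊆ T.children u) (hv : v ∈ T.children u) (hvVs : v ∉ Vs)
    (hWW' : W ∪ W' = T.children v) (hd : Disjoint W W') (haW' : a ∈ T.descU W') {p q : List V}
    (hp : IsDWPath T u Vs v W p) (hq : IsDPath T v W' a q) :
    ∃ l, IsDPath T u (insert v Vs) a l ∧ pathWeight f l = pathWeight f p + pathWeight f q := by
  have hW : W ⊆ T.children v := hWW' ▸ Set.subset_union_left
  have hW' : W' ⊆ T.children v := hWW' ▸ Set.subset_union_right
  obtain ⟨α, β, rfl, hα, hβ⟩ := hp.exists_eq hVs hv hvVs hW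
  obtain ⟨t, rfl, ht, hta⟩ :=
    hq.exists_eq_cons hW' fun h => T.notMem_descU hW' (h ▸ haW')
  have hset : insert u (T.descU Vs ∪ insert v (T.descU W ∪ T.descU W')) =
      {u} ∪ T.descU (insert v Vs) := by
    rw [T.descU_insert, T.desc_eq_insert_descU_children, ← hWW', T.descU_union]
    ext
    simp only [Set.mem_union, Set.mem_insert_iff, Set.mem_singleton_iff]
    tauto
  refine ⟨u :: (α ++ (β ++ v :: t)), ⟨hset ▸ isConformingOrder_cons_append_append_cons hVs hv
    hvVs hW hW' hd hα hβ ht, rfl, ?_⟩, ?_⟩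
  · rw [← List.cons_append, ← List.append_assoc, List.getLast?_append_cons]
    cases t with
    | nil => simp at hta
    | cons b t => rwa [List.getLast?_cons_cons]
  · have e : u :: (α ++ (β ++ v :: t)) = u :: α ++ β ++ v :: t := by simp
    rw [e, pathWeight_append_cons]
    simp

variable {X : Type} [MetricSpace X] [Fintype V] (f : V → X)

lemma exists_isDWPath_pathWeight_eq_DW (hVs : Vs ⊆ T.children u) (hv : v ∈ T.children u)
    (hvVs : v ∉ Vs) (hW : W ⊆ T.children v) :
    ∃ p, IsDWPath T u Vs v W p ∧ pathWeight f p = DW T f u Vs v W := by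
  obtain ⟨p, hp⟩ := exists_isDWPath hVs hv hvVs hW
  rw [DW_eq_sInf]
  exact exists_pathWeight_eq_sInf f (fun _ h => h.1.nodup) hp

lemma exists_isDPath_pathWeight_eq_DD (hW' : W' ⊆ T.children v) (ha : a ∈ T.descU W') :
    ∃ q, IsDPath T v W' a q ∧ pathWeight f q = DD T f v W' a := by
  obtain ⟨q, hq⟩ := exists_isDPath hW' ha
  rw [DD_eq_sInf]
  exact exists_pathWeight_eq_sInf f (fun _ h => h.1.nodup) hq

lemma exists_isDPath_insert_pathWeight_eq (hVs : Vs ⊆ T.children u) (hv : v ∈ T.children u)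
    (hvVs : v ∉ Vs) (hWW' : W ∪ W' = T.children v) (hd : Disjoint W W')
    (haW' : a ∈ T.descU W') :
    ∃ l, IsDPath T u (insert v Vs) a l ∧
      pathWeight f l = DW T f u Vs v W + DD T f v W' a := by
  obtain ⟨p, hp, hpw⟩ :=
    exists_isDWPath_pathWeight_eq_DW f hVs hv hvVs (hWW' ▸ Set.subset_union_left)
  obtain ⟨q, hq, hqw⟩ := exists_isDPath_pathWeight_eq_DD f (hWW' ▸ Set.subset_union_right) haW'
  rw [← hpw, ← hqw]
  exact hp.exists_isDPath_insert f hVs hv hvVs hWW' hd haW' hq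

end Recurrence

theorem stmt1_general {V X : Type} [Fintype V] [MetricSpace X]
    (f : V → X)
    (T : ParentTree V) (u v : V) (Vs : Set V)
    (hVs : Vs ⊆ T.children u) (hv : v ∈ T.children u) (hvVs : v ∉ Vs) :
    DD T f u (insert v Vs) v = DW T f u Vs v (T.children v) ∧
    ∀ a ∈ T.desc v, a ≠ v →
      DD T f u (insert v Vs) a =
        sInf {r | ∃ W W' : Set V, W ∪ W' = T.children v ∧ Disjoint W W' ∧
          a ∈ T.descU W' ∧ r = DW T f u Vs v W + DD T f v W' a} := by
  refine ⟨?_, fun a ha hav => ?_⟩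
  · simp_rw [DD_eq_sInf, DW_eq_sInf, isDPath_insert_iff hVs hv hvVs]
  obtain ⟨c, hc, hac⟩ := T.exists_mem_children_of_mem_desc ha hav
  have haC : a ∈ T.descU (T.children v) := T.mem_descU.2 ⟨c, hc, hac⟩
  refine le_antisymm (le_csInf ⟨_, ∅, T.children v, Set.empty_union _, Set.empty_disjoint _, haC,
    rfl⟩ ?_) ?_
  · rintro _ ⟨W, W', hWW', hd, haW', rfl⟩
    obtain ⟨l, hl, hlw⟩ := exists_isDPath_insert_pathWeight_eq f hVs hv hvVs hWW' hd haW'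
    exact hlw ▸ DD_le_pathWeight f T hl
  · obtain ⟨l₀, hl₀, -⟩ := exists_isDPath_insert_pathWeight_eq f hVs hv hvVs
      (Set.empty_union _) (Set.empty_disjoint _) haC
    rw [DD_eq_sInf]
    obtain ⟨l, hl, hlw⟩ := exists_pathWeight_eq_sInf f (fun _ h => h.1.nodup) hl₀
    obtain ⟨W, W', p, q, hWW', hd, haW', hp, hq, hw⟩ :=
      hl.exists_isDWPath_isDPath f hVs hv hvVs ha hav
    rw [← hlw, hw]
    refine csInf_le_of_le ⟨0, ?_⟩ ⟨W, W', hWW', hd, haW', rfl⟩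
      (add_le_add (DW_le_pathWeight f T hp) (DD_le_pathWeight f T hq))
    rintro _ ⟨W, W', -, -, -, rfl⟩
    exact add_nonneg (DW_nonneg f T _ _ _ _) (DD_nonneg f T _ _ _)

/-- The recurrence (eq-a): `D^u_{V ∪ {v}}(v) = D^u_{V,C(v)}(v)`, and for
`a ∈ T(v)`, `a ≠ v`, the value `D^u_{V ∪ {v}}(a)` is the minimum over
bipartitions `W ⊎ W̄ = C(v)` with `a ∈ T(W̄)` of `D^u_{V,W}(v) + D^v_{W̄}(a)`. -/
theorem stmt1 {V X : Type} [Fintype V] [MetricSpace X]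
    (hn : 3 ≤ Fintype.card V) (f : V → X) (hf : Function.Injective f)
    (T : ParentTree V) (u v : V) (Vs : Set V)
    (hVs : Vs ⊆ T.children u) (hv : v ∈ T.children u) (hvVs : v ∉ Vs) :
    DD T f u (insert v Vs) v = DW T f u Vs v (T.children v) ∧
    ∀ a ∈ T.desc v, a ≠ v →
      DD T f u (insert v Vs) a =
        sInf {r | ∃ W W' : Set V, W ∪ W' = T.children v ∧ Disjoint W W' ∧
          a ∈ T.descU W' ∧ r = DW T f u Vs v W + DD T f v W' a} :=
  stmt1_general f T u v Vs hVs hv hvVs
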